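/- arXiv:1911.08068 — 5 statements merged into one kernel-verified Lean document; each statement's English description precedes it below -/
import Mathlib

section
/- For every z ∈ [l, u], the tiling activation φ(z) has at least one and at most two nonzero entries, i.e. 1 ≤ ‖φ(z)‖_0 ≤ 2. -/
/-- Indicator of positivity: `Iplus x = 1` if `x > 0`, else `0`. -/
noncomputable def Iplus (x : ℝ) : ℝ := if 0 < x then 1 else 0

/-- Tiling vector entries: `tvec l δ i = l + (i - 1) * δ` (1-based index). -/
noncomputable def tvec (l δ : ℝ) (i : ℕ) : ℝ := l + ((i : ℝ) - 1) * δ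

/-- Tiling activation, componentwise. -/
noncomputable def phi (l δ z : ℝ) (i : ℕ) : ℝ :=
  1 - Iplus (max (tvec l δ i - z) 0 + max (z - δ - tvec l δ i) 0)

/-- Fuzzy indicator. -/
noncomputable def Ietaplus (η x : ℝ) : ℝ := Iplus (η - x) * x + Iplus (x - η)

/-- Fuzzy tiling activation, componentwise. -/
noncomputable def phiEta (l δ η z : ℝ) (i : ℕ) : ℝ :=
  1 - Ietaplus η (max (tvec l δ i - z) 0 + max (z - δ - tvec l δ i) 0)

/- Number of nonzero entries among indices 1,…,k. -/
open scoped Classical in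
noncomputable def norm0 (k : ℕ) (v : ℕ → ℝ) : ℕ :=
  ((Finset.Icc 1 k).filter fun j => v j ≠ 0).card

lemma phi_ne_iff (l δ z : ℝ) (i : ℕ) :
    phi l δ z i ≠ 0 ↔ tvec l δ i - z ≤ 0 ∧ z - δ - tvec l δ i ≤ 0 := by
  unfold phi Iplus
  split_ifs with h
  · constructor
    · intro h'; simp at h'
    · rintro ⟨ha, hb⟩
      rw [max_eq_right ha, max_eq_right hb] at h
      linarith
  · push_neg at h
    constructor
    · intro _
      constructor
      · have h1 := le_max_left (tvec l δ i - z) (0:ℝ)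
        have h2 := le_max_right (z - δ - tvec l δ i) (0:ℝ)
        linarith
      · have h1 := le_max_left (z - δ - tvec l δ i) (0:ℝ)
        have h2 := le_max_right (tvec l δ i - z) (0:ℝ)
        linarith
    · intro _; norm_num

theorem stmt4 (l u δ : ℝ) (k : ℕ) (hk : 0 < k) (hlu : l < u) (hδ : 0 < δ)
    (hkδ : (k : ℝ) * δ = u - l) (z : ℝ) (hz : z ∈ Set.Icc l u) :
    1 ≤ norm0 k (phi l δ z) ∧ norm0 k (phi l δ z) ≤ 2 := by
  classical
  obtain ⟨hzl, hzu⟩ := hz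
  set t : ℝ := (z - l) / δ with ht
  have ht0 : 0 ≤ t := div_nonneg (by linarith) hδ.le
  have htk : t ≤ (k : ℝ) := by
    rw [div_le_iff₀ hδ]; linarith [hkδ]
  -- membership characterization
  have hmem : ∀ i : ℕ, phi l δ z i ≠ 0 ↔ ((i : ℝ) - 1 ≤ t ∧ t ≤ (i : ℝ)) := by
    intro i
    rw [phi_ne_iff]
    unfold tvec
    constructor
    · rintro ⟨h1, h2⟩
      constructor
      · rw [le_div_iff₀ hδ]; linarith
      · rw [div_le_iff₀ hδ]; linarith
    · rintro ⟨h1, h2⟩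
      rw [le_div_iff₀ hδ] at h1
      rw [div_le_iff₀ hδ] at h2
      constructor <;> linarith
  unfold norm0
  set S := (Finset.Icc 1 k).filter fun j => phi l δ z j ≠ 0 with hS
  constructor
  · -- nonempty
    have hfl0 : (0:ℤ) ≤ ⌊t⌋ := Int.floor_nonneg.mpr ht0
    set i0 : ℕ := min (⌊t⌋.toNat + 1) k with hi0
    have hi0k : i0 ≤ k := min_le_right _ _
    have hi01 : 1 ≤ i0 := le_min (Nat.succ_le_succ (Nat.zero_le _)) hk
    have hmemi0 : i0 ∈ S := by
      rw [hS, Finset.mem_filter, Finset.mem_Icc]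
      refine ⟨⟨hi01, hi0k⟩, ?_⟩
      rw [hmem]
      by_cases hc : ⌊t⌋.toNat + 1 ≤ k
      · have : i0 = ⌊t⌋.toNat + 1 := min_eq_left hc
        rw [this]
        have hcast : ((⌊t⌋.toNat : ℝ)) = (⌊t⌋ : ℝ) := by
          exact_mod_cast congrArg (fun n : ℤ => (n : ℝ)) (Int.toNat_of_nonneg hfl0)
        push_cast [hcast]
        constructor
        · linarith [Int.floor_le t]
        · linarith [Int.lt_floor_add_one t]
      · push_neg at hc
        have : i0 = k := min_eq_right (by omega)
        rw [this]
        have hfk : (k : ℤ) ≤ ⌊t⌋ := by omega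
        have : (k : ℝ) ≤ t := by
          have := Int.floor_le t
          have : ((k:ℤ):ℝ) ≤ (⌊t⌋:ℝ) := by exact_mod_cast hfk
          push_cast at this
          linarith [Int.floor_le t]
        constructor
        · linarith
        · linarith
    have : S.Nonempty := ⟨i0, hmemi0⟩
    exact Finset.card_pos.mpr this
  · -- card ≤ 2
    have hsub : S ⊆ {⌈t⌉.toNat, ⌊t⌋.toNat + 1} := by
      intro i hi
      rw [hS, Finset.mem_filter, Finset.mem_Icc] at hi
      obtain ⟨⟨hi1, hik⟩, hne⟩ := hi
      rw [hmem] at hne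
      obtain ⟨h1, h2⟩ := hne
      have hcl : ⌈t⌉ ≤ (i : ℤ) := by
        have := Int.ceil_le.mpr (show t ≤ ((i:ℤ):ℝ) by push_cast; linarith)
        exact this
      have hfl : (i : ℤ) ≤ ⌊t⌋ + 1 := by
        have hh : (i : ℤ) ≤ ⌊t + 1⌋ := Int.le_floor.mpr (by push_cast; linarith)
        rwa [Int.floor_add_one] at hh
      have hfc : ⌊t⌋ ≤ ⌈t⌉ := Int.floor_le_ceil t
      have hfl0 : (0:ℤ) ≤ ⌊t⌋ := Int.floor_nonneg.mpr ht0
      have hc0 : (0:ℤ) ≤ ⌈t⌉ := Int.ceil_nonneg ht0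
      simp only [Finset.mem_insert, Finset.mem_singleton]
      omega
    calc S.card ≤ ({⌈t⌉.toNat, ⌊t⌋.toNat + 1} : Finset ℕ).card := Finset.card_le_card hsub
      _ ≤ 2 := Finset.card_insert_le _ _ |>.trans (by simp)
end

section
/- Sparsity guarantee for FTA: for every η > 0 and every z ∈ [l, u], the number of nonzero entries of the fuzzy tiling activation satisfies ‖φ_η(z)‖_0 ≤ 2·⌊η/δ⌋ + 3. -/
theorem stmt10 (l u δ : ℝ) (k : ℕ) (hk : 0 < k) (hlu : l < u) (hδ : 0 < δ)
    (hkδ : (k : ℝ) * δ = u - l) (η : ℝ) (hη : 0 < η)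
    (z : ℝ) (hz : z ∈ Set.Icc l u) :
    (norm0 k (phiEta l δ η z) : ℤ) ≤ 2 * ⌊η / δ⌋ + 3 := by
  classical
  set lo : ℝ := (z - l - δ - η) / δ with hlo
  set hi : ℝ := (z - l + η) / δ with hhi
  set A : ℤ := ⌈lo⌉ + 1 with hA
  set B : ℤ := ⌊hi⌋ + 1 with hB
  set E : ℤ := ⌊η / δ⌋ with hE
  have hE0 : 0 ≤ E := Int.floor_nonneg.mpr (le_of_lt (div_pos hη hδ))
  -- Every nonzero index lies in [A, B]
  have hsub : ∀ i ∈ (Finset.Icc 1 k).filter (fun j => phiEta l δ η z j ≠ 0),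
      (i : ℤ) ∈ Finset.Icc A B := by
    intro i hi'
    simp only [Finset.mem_filter, Finset.mem_Icc] at hi' ⊢
    obtain ⟨⟨h1, h2⟩, hne⟩ := hi'
    set d : ℝ := max (tvec l δ i - z) 0 + max (z - δ - tvec l δ i) 0 with hd
    have hdη : d ≤ η := by
      by_contra hgt
      push_neg at hgt
      apply hne
      unfold phiEta Ietaplus Iplus
      rw [← hd, if_neg (by linarith), if_pos (by linarith)]
      ring
    have hm1 : (0:ℝ) ≤ max (tvec l δ i - z) 0 := le_max_right _ _
    have hm2 : (0:ℝ) ≤ max (z - δ - tvec l δ i) 0 := le_max_right _ _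
    have h1' : tvec l δ i - z ≤ η := by
      have := le_max_left (tvec l δ i - z) 0
      linarith [hdη]
    have h2' : z - δ - tvec l δ i ≤ η := by
      have := le_max_left (z - δ - tvec l δ i) 0
      linarith [hdη]
    unfold tvec at h1' h2'
    constructor
    · have hceil : ⌈lo⌉ ≤ (i : ℤ) - 1 := by
        apply Int.ceil_le.mpr
        push_cast
        rw [hlo, div_le_iff₀ hδ]
        nlinarith [h2']
      omega
    · have hfl : (i : ℤ) - 1 ≤ ⌊hi⌋ := by
        apply Int.le_floor.mpr
        push_cast
        rw [hhi, le_div_iff₀ hδ]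
        nlinarith [h1']
      omega
  -- Cardinality bound via injection into Finset.Icc A B
  have hcard : norm0 k (phiEta l δ η z) ≤ (Finset.Icc A B).card := by
    unfold norm0
    exact Finset.card_le_card_of_injOn (fun i => (i : ℤ)) hsub
      (fun a _ b _ hab => Nat.cast_injective hab)
  have hBA : B + 1 - A ≤ 2 * E + 3 := by
    have h1 : (⌊hi⌋ : ℝ) ≤ hi := Int.floor_le hi
    have h2 : lo ≤ (⌈lo⌉ : ℝ) := Int.le_ceil lo
    have h3 : η / δ < E + 1 := Int.lt_floor_add_one (η / δ)
    have hdiff : hi - lo = 1 + 2 * (η / δ) := by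
      rw [hhi, hlo]
      field_simp
      ring
    have hlt : ((⌊hi⌋ - ⌈lo⌉ : ℤ) : ℝ) < 2 * (E : ℝ) + 3 := by
      push_cast
      linarith
    have : (⌊hi⌋ - ⌈lo⌉ : ℤ) < 2 * E + 3 := by exact_mod_cast hlt
    omega
  have hIcc : (Finset.Icc A B).card = (B + 1 - A).toNat := Int.card_Icc A B
  have h1 : (norm0 k (phiEta l δ η z) : ℤ) ≤ ((B + 1 - A).toNat : ℤ) := by
    rw [← hIcc]; exact_mod_cast hcard
  have h2 : ((B + 1 - A).toNat : ℤ) ≤ 2 * E + 3 := by omega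
  omega
end

section
/- Refined sparsity bound at grid points: for every η > 0 and every index i with 2 ≤ i ≤ k, if z = c_i then ‖φ_η(z)‖_0 ≤ 2·⌊η/δ⌋ + 2. -/
theorem stmt11 (l u δ : ℝ) (k : ℕ) (hk : 0 < k) (hlu : l < u) (hδ : 0 < δ)
    (hkδ : (k : ℝ) * δ = u - l) (η : ℝ) (hη : 0 < η)
    (i : ℕ) (hi2 : 2 ≤ i) (hik : i ≤ k) (z : ℝ) (hz : z = tvec l δ i) :
    (norm0 k (phiEta l δ η z) : ℤ) ≤ 2 * ⌊η / δ⌋ + 2 := by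
  classical
  have hfl : 0 ≤ ⌊η / δ⌋ := Int.floor_nonneg.mpr (by positivity)
  set m : ℕ := (⌊η / δ⌋).toNat with hm
  have hmz : (m : ℤ) = ⌊η / δ⌋ := Int.toNat_of_nonneg hfl
  have hsub : ((Finset.Icc 1 k).filter fun j => phiEta l δ η z j ≠ 0) ⊆
      Finset.Icc (i - 1 - m) (i + m) := by
    intro j hj
    simp only [Finset.mem_filter, Finset.mem_Icc] at hj ⊢
    obtain ⟨⟨hj1, hjk⟩, hne⟩ := hj
    set d : ℝ := max (tvec l δ j - z) 0 + max (z - δ - tvec l δ j) 0 with hd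
    have hdle : d ≤ η := by
      by_contra h
      push_neg at h
      apply hne
      unfold phiEta Ietaplus Iplus
      rw [← hd, if_neg (by linarith), if_pos (by linarith)]
      ring
    have e1 : tvec l δ j - z = ((j : ℝ) - i) * δ := by rw [hz]; unfold tvec; ring
    have e2 : z - δ - tvec l δ j = ((i : ℝ) - j - 1) * δ := by rw [hz]; unfold tvec; ring
    rw [hd, e1, e2] at hdle
    constructor
    · rcases le_or_gt i (j + 1) with h | h
      · omega
      · have hB : ((i : ℝ) - j - 1) * δ ≤ η := by
          have h1 := le_max_left (((i : ℝ) - j - 1) * δ) 0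
          have h2 := le_max_right (((j : ℝ) - i) * δ) 0
          linarith
        have h2 : ((i : ℝ) - j - 1) ≤ η / δ := by
          rw [le_div_iff₀ hδ]; linarith
        have h3 : (i : ℤ) - j - 1 ≤ ⌊η / δ⌋ := Int.le_floor.mpr (by push_cast; linarith)
        omega
    · rcases le_or_gt j i with h | h
      · omega
      · have hA : ((j : ℝ) - i) * δ ≤ η := by
          have h1 := le_max_left (((j : ℝ) - i) * δ) 0
          have h2 := le_max_right (((i : ℝ) - j - 1) * δ) 0
          linarith
        have h2 : ((j : ℝ) - i) ≤ η / δ := by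
          rw [le_div_iff₀ hδ]; linarith
        have h3 : (j : ℤ) - i ≤ ⌊η / δ⌋ := Int.le_floor.mpr (by push_cast; linarith)
        omega
  have hcard : norm0 k (phiEta l δ η z) ≤ 2 * m + 2 := by
    unfold norm0
    calc ((Finset.Icc 1 k).filter fun j => phiEta l δ η z j ≠ 0).card
        ≤ (Finset.Icc (i - 1 - m) (i + m)).card := Finset.card_le_card hsub
      _ = (i + m) + 1 - (i - 1 - m) := Nat.card_Icc _ _
      _ ≤ 2 * m + 2 := by omega
  have : (norm0 k (phiEta l δ η z) : ℤ) ≤ 2 * (m : ℤ) + 2 := by exact_mod_cast hcard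
  omega
end

section
/- Refined sparsity bound at the left endpoint: for every η > 0, if z = c_1 = l then ‖φ_η(z)‖_0 ≤ ⌊η/δ⌋ + 1. -/
theorem stmt12 (l u δ : ℝ) (k : ℕ) (hk : 0 < k) (hlu : l < u) (hδ : 0 < δ)
    (hkδ : (k : ℝ) * δ = u - l) (η : ℝ) (hη : 0 < η)
    (z : ℝ) (hz : z = tvec l δ 1) :
    (norm0 k (phiEta l δ η z) : ℤ) ≤ ⌊η / δ⌋ + 1 := by
  classical
  have hz' : z = l := by simp [hz, tvec]
  set m : ℕ := (⌊η / δ⌋).toNat with hm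
  have hfloor_nonneg : 0 ≤ ⌊η / δ⌋ := by
    apply Int.floor_nonneg.mpr
    positivity
  have hsub : ((Finset.Icc 1 k).filter fun j => phiEta l δ η z j ≠ 0)
      ⊆ Finset.Icc 1 (m + 1) := by
    intro i hi
    simp only [Finset.mem_filter, Finset.mem_Icc] at hi
    obtain ⟨⟨h1i, hik⟩, hne⟩ := hi
    refine Finset.mem_Icc.mpr ⟨h1i, ?_⟩
    by_contra hgt
    push_neg at hgt
    -- i ≥ m + 2, so (i-1)*δ > η
    have hi1 : (1 : ℝ) ≤ (i : ℝ) := by exact_mod_cast h1i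
    have harg : max (tvec l δ i - z) 0 + max (z - δ - tvec l δ i) 0
        = ((i : ℝ) - 1) * δ := by
      rw [hz']
      have h1 : tvec l δ i - l = ((i : ℝ) - 1) * δ := by simp [tvec]
      have h2 : l - δ - tvec l δ i = -((i : ℝ) * δ) := by simp [tvec]; ring
      rw [h1, h2, max_eq_left, max_eq_right]
      · ring
      · have : 0 < (i : ℝ) * δ := by
          apply mul_pos _ hδ
          linarith
        linarith
      · apply mul_nonneg _ hδ.le
        linarith
    have hbig : η < ((i : ℝ) - 1) * δ := by
      have h1 : (⌊η / δ⌋ : ℝ) + 1 ≤ (i : ℝ) - 1 := by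
        have : (m : ℝ) + 2 ≤ (i : ℝ) := by exact_mod_cast hgt
        have hmr : (m : ℝ) = (⌊η / δ⌋ : ℝ) := by
          rw [hm]; exact_mod_cast Int.toNat_of_nonneg hfloor_nonneg
        linarith
      have h2 : η / δ < (⌊η / δ⌋ : ℝ) + 1 := Int.lt_floor_add_one _
      have h3 : η / δ < (i : ℝ) - 1 := lt_of_lt_of_le h2 h1
      calc η = (η / δ) * δ := by field_simp
        _ < ((i : ℝ) - 1) * δ := by
          apply mul_lt_mul_of_pos_right h3 hδ
    apply hne
    unfold phiEta Ietaplus Iplus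
    rw [harg]
    rw [if_neg (by linarith), if_pos (by linarith)]
    ring
  have hcard : norm0 k (phiEta l δ η z) ≤ m + 1 := by
    have := Finset.card_le_card hsub
    simpa [norm0, Nat.card_Icc] using this
  have : (norm0 k (phiEta l δ η z) : ℤ) ≤ (m : ℤ) + 1 := by exact_mod_cast hcard
  rw [hm] at this
  rwa [Int.toNat_of_nonneg hfloor_nonneg] at this
end

section
/- Corollary (choosing η for a desired sparsity level): let ρ ∈ [0, 1) with ρ·k ≥ 3, and let η > 0 satisfy ⌊η/δ⌋ ≤ (k·ρ − 3)/2. Then for every z ∈ [l, u], the number of nonzero entries of the fuzzy tiling activation satisfies ‖φ_η(z)‖_0 ≤ k·ρ. -/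
/-!
An entry `φ_η(z)_i` vanishes as soon as the distance from `z` to the tile `[c_i, c_i + δ]` exceeds `η`,
so the nonzero entries have `c_i ∈ [z - δ - η, z + η]`, an interval of length `δ + 2η`. The points `c_i`
are spaced `δ` apart, so there are at most `⌊2η/δ⌋ + 2 ≤ 2⌊η/δ⌋ + 3 ≤ kρ` of them.
-/

open Finset

lemma Int.floor_two_mul_le {R : Type*} [CommRing R] [LinearOrder R] [IsStrictOrderedRing R]
    [FloorRing R] (x : R) : ⌊2 * x⌋ ≤ 2 * ⌊x⌋ + 1 := by
  have h : 2 * x < ((2 * ⌊x⌋ + 2 : ℤ) : R) := by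
    push_cast; linarith [Int.lt_floor_add_one x]
  have := Int.floor_lt.mpr h
  omega

lemma Finset.card_le_floor_sub_add_one {s : Finset ℕ} {x y : ℝ} (hxy : x ≤ y)
    (hs : ∀ i ∈ s, x ≤ i ∧ (i : ℝ) ≤ y) : (#s : ℝ) ≤ ⌊y - x⌋ + 1 := by
  rcases s.eq_empty_or_nonempty with rfl | hne
  · have : (0 : ℤ) ≤ ⌊y - x⌋ := Int.floor_nonneg.mpr (sub_nonneg.mpr hxy)
    rw [card_empty, Nat.cast_zero]
    exact_mod_cast (by omega : (0 : ℤ) ≤ ⌊y - x⌋ + 1)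
  set m := s.min' hne
  set M := s.max' hne
  have hmM : m ≤ M := s.min'_le_max' hne
  have hcard : #s ≤ M + 1 - m :=
    (card_le_card fun i hi => mem_Icc.mpr ⟨s.min'_le i hi, s.le_max' i hi⟩).trans
      (Nat.card_Icc m M).le
  have hspan : ((M - m : ℕ) : ℤ) ≤ ⌊y - x⌋ := by
    rw [Int.le_floor]
    push_cast [hmM]
    linarith [(hs m (s.min'_mem hne)).1, (hs M (s.max'_mem hne)).2]
  have : ((#s : ℕ) : ℤ) ≤ ⌊y - x⌋ + 1 := by omega
  exact_mod_cast this

lemma card_filter_tvec_mem_Icc_le (s : Finset ℕ) {l δ a b : ℝ} (hδ : 0 < δ) (hab : a ≤ b) :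
    (#{i ∈ s | tvec l δ i ∈ Set.Icc a b} : ℝ) ≤ ⌊(b - a) / δ⌋ + 1 := by
  have hspan : (b - l) / δ - (a - l) / δ = (b - a) / δ := by ring
  rw [← hspan, ← add_sub_add_left_eq_sub _ _ (1 : ℝ)]
  refine card_le_floor_sub_add_one (by gcongr) fun i hi => ?_
  obtain ⟨hai, hib⟩ := (mem_filter.mp hi).2
  unfold tvec at hai hib
  constructor
  · have : (a - l) / δ ≤ i - 1 := by rw [div_le_iff₀ hδ]; linarith
    linarith
  · have : (i : ℝ) - 1 ≤ (b - l) / δ := by rw [le_div_iff₀ hδ]; linarith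
    linarith

lemma tvec_mem_Icc_of_phiEta_ne_zero {l δ η z : ℝ} {i : ℕ} (h : phiEta l δ η z i ≠ 0) :
    tvec l δ i ∈ Set.Icc (z - δ - η) (z + η) := by
  have hdist : max (tvec l δ i - z) 0 + max (z - δ - tvec l δ i) 0 ≤ η := by
    by_contra! hlt
    apply h
    unfold phiEta Ietaplus Iplus
    rw [if_neg (by linarith), if_pos (by linarith)]
    ring
  constructor <;> linarith [le_max_left (tvec l δ i - z) 0, le_max_right (tvec l δ i - z) 0,
    le_max_left (z - δ - tvec l δ i) 0, le_max_right (z - δ - tvec l δ i) 0]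

theorem stmt14_general (l δ : ℝ) (k : ℕ) (hδ : 0 < δ) (ρ : ℝ) (η : ℝ) (hη : 0 < η)
    (hfloor : (⌊η / δ⌋ : ℝ) ≤ ((k : ℝ) * ρ - 3) / 2)
    (z : ℝ) :
    (norm0 k (phiEta l δ η z) : ℝ) ≤ (k : ℝ) * ρ := by
  classical
  have hsupp : norm0 k (phiEta l δ η z) ≤
      #{i ∈ Icc 1 k | tvec l δ i ∈ Set.Icc (z - δ - η) (z + η)} := by
    unfold norm0
    exact card_le_card (monotone_filter_right _ fun _ _ => tvec_mem_Icc_of_phiEta_ne_zero)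
  have hwidth : (z + η - (z - δ - η)) / δ = 2 * (η / δ) + 1 := by field_simp; ring
  have hcount := card_filter_tvec_mem_Icc_le (Icc 1 k) (l := l) hδ
    (by linarith : z - δ - η ≤ z + η)
  rw [hwidth, Int.floor_add_one] at hcount
  have hfloor2 : ((⌊2 * (η / δ)⌋ : ℤ) : ℝ) ≤ 2 * ⌊η / δ⌋ + 1 := by
    exact_mod_cast Int.floor_two_mul_le (η / δ)
  calc (norm0 k (phiEta l δ η z) : ℝ) ≤ _ := by exact_mod_cast hsupp
    _ ≤ _ := hcount
    _ ≤ (k : ℝ) * ρ := by push_cast; linarith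

theorem stmt14 (l u δ : ℝ) (k : ℕ) (hk : 0 < k) (hlu : l < u) (hδ : 0 < δ)
    (hkδ : (k : ℝ) * δ = u - l) (ρ : ℝ) (hρ0 : 0 ≤ ρ) (hρ1 : ρ < 1)
    (hρk : 3 ≤ ρ * (k : ℝ)) (η : ℝ) (hη : 0 < η)
    (hfloor : (⌊η / δ⌋ : ℝ) ≤ ((k : ℝ) * ρ - 3) / 2)
    (z : ℝ) (hz : z ∈ Set.Icc l u) :
    (norm0 k (phiEta l δ η z) : ℝ) ≤ (k : ℝ) * ρ :=
  stmt14_general l δ k hδ ρ η hη hfloor z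
end
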